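/- Let p ∉ {2,5} be a prime and α, k, L ≥ 1 integers. Then h_{p^α,Lk} = h_{p^{α+ord_p(ρ_{k,L})},L} / gcd(k, h_{p^{α+ord_p(ρ_{k,L})},L}). -/

import Mathlib

def rho (k L : ℕ) : ℕ := ∑ i ∈ Finset.range k, 10 ^ (L * i)

/-- `h p α M` is the multiplicative order of `10^M` modulo `p^(α + ord_p(10^M - 1))`. -/
noncomputable def h (p α M : ℕ) : ℕ :=
  orderOf ((10 : ZMod (p ^ (α + padicValNat p (10 ^ M - 1)))) ^ M)

/-! Since `10^(Lk) - 1 = (10^L - 1) ρ_{k,L}`, the two moduli in the formula coincide, and the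
order of `(10^L)^k` is the order of `10^L` divided by its gcd with `k`. -/

open Finset

lemma Nat.sub_one_mul_geom_sum (m n : ℕ) : (m - 1) * ∑ i ∈ range n, m ^ i = m ^ n - 1 := by
  rcases m with _ | m
  · cases n <;> simp
  · exact eq_tsub_of_add_eq (by simpa [mul_comm] using geom_sum_mul_add m n)

lemma rho_eq_geom_sum (k L : ℕ) : rho k L = ∑ i ∈ range k, (10 ^ L) ^ i := by
  simp only [rho, pow_mul]

lemma sub_one_mul_rho (k L : ℕ) : (10 ^ L - 1) * rho k L = 10 ^ (L * k) - 1 := by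
  rw [rho_eq_geom_sum, Nat.sub_one_mul_geom_sum, pow_mul]

lemma rho_pos {k : ℕ} (hk : k ≠ 0) (L : ℕ) : 0 < rho k L :=
  sum_pos (fun _ _ ↦ by positivity) (nonempty_range_iff.mpr hk)

lemma padicValNat_pow_mul_sub_one (p : ℕ) [Fact p.Prime] {k L : ℕ} (hk : k ≠ 0) (hL : L ≠ 0) :
    padicValNat p (10 ^ (L * k) - 1) = padicValNat p (rho k L) + padicValNat p (10 ^ L - 1) := by
  have hpow : 10 ^ L - 1 ≠ 0 := Nat.sub_ne_zero_of_lt (Nat.one_lt_pow hL (by norm_num))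
  rw [← sub_one_mul_rho, padicValNat.mul hpow (rho_pos hk L).ne', add_comm]

theorem h_formula_general (p : ℕ) (hp : p.Prime)
    (α k L : ℕ) (hk : 1 ≤ k) (hL : 1 ≤ L) :
    h p α (L * k) =
      h p (α + padicValNat p (rho k L)) L /
        Nat.gcd k (h p (α + padicValNat p (rho k L)) L) := by
  have : Fact p.Prime := ⟨hp⟩
  have hk₀ : k ≠ 0 := Nat.one_le_iff_ne_zero.mp hk
  unfold h
  rw [padicValNat_pow_mul_sub_one p hk₀ (Nat.one_le_iff_ne_zero.mp hL), ← add_assoc, pow_mul,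
    orderOf_pow' _ hk₀, Nat.gcd_comm]

theorem h_formula (p : ℕ) (hp : p.Prime) (hp2 : p ≠ 2) (hp5 : p ≠ 5)
    (α k L : ℕ) (hα : 1 ≤ α) (hk : 1 ≤ k) (hL : 1 ≤ L) :
    h p α (L * k) =
      h p (α + padicValNat p (rho k L)) L /
        Nat.gcd k (h p (α + padicValNat p (rho k L)) L) :=
  h_formula_general p hp α k L hk hL
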